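/- arXiv:2308.11477 — 6 statements merged into one kernel-verified Lean document; each statement's English description precedes it below -/
import Mathlib

section
/- Suppose x_p ∈ {0,1} for every leaf l and every p ∈ DP_l, and ρ_{j,a} ∈ {0,1} for every internal node j and every a ∈ S_j, and that constraints (alpha) and (gamma) hold. Then for every internal node j there exists a split check a*_j ∈ S_j such that ρ_{j,a*_j} = 1 and ρ_{j,a} = 0 for every a ∈ S_j with a ≠ a*_j. -/
open Finset

attribute [local instance] Classical.propDecidable

/-- The decision paths for a leaf `l` (a Boolean string of length `k`) of the complete
binary tree of depth `k`: a split check, belonging to the candidate set `S j` of the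
corresponding node `j = l.take i`, for every depth `i < k`, together with a target in `T`.
The internal nodes of the path `p_BT(l)` are exactly the proper prefixes `l.take i`
(`i < k`) of `l`, and the split check assigned by `p` at the node `l.take i` is `p.1 i`. -/
noncomputable def DP {F T : Type} [Fintype T] (k : ℕ) (S : List Bool → Finset (F × ℝ))
    (l : List Bool) : Finset ((Fin k → F × ℝ) × T) :=
  (Fintype.piFinset fun i : Fin k => S (l.take i.1)) ×ˢ (Finset.univ : Finset T)

/-- Lemma 1: if `x` and `ρ` are binary and satisfy constraints (alpha) and (gamma),
then for every internal node `j` there is a split check `a*_j ∈ S_j` with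
`ρ_{j,a*_j} = 1` and `ρ_{j,a} = 0` for all other `a ∈ S_j`. -/
theorem stmt0 {F T : Type} [Fintype F] [Nonempty F] [Fintype T] [Nonempty T]
    (k : ℕ) (hk : 1 ≤ k)
    (S : List Bool → Finset (F × ℝ))
    (hS : ∀ j : List Bool, j.length < k → (S j).Nonempty)
    (x : List Bool → (Fin k → F × ℝ) × T → ℝ)
    (ρ : List Bool → F × ℝ → ℝ)
    -- x is binary
    (hxbin : ∀ l : List Bool, l.length = k → ∀ p ∈ DP k S l, x l p = 0 ∨ x l p = 1)
    -- ρ is binary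
    (hρbin : ∀ j : List Bool, j.length < k → ∀ a ∈ S j, ρ j a = 0 ∨ ρ j a = 1)
    -- constraints (alpha)
    (halpha : ∀ l : List Bool, l.length = k → ∑ p ∈ DP k S l, x l p = 1)
    -- constraints (gamma)
    (hgamma : ∀ l : List Bool, l.length = k → ∀ i : Fin k, ∀ a ∈ S (l.take i.1),
      ∑ p ∈ DP k S l, (if p.1 i = a then x l p else 0) = ρ (l.take i.1) a) :
    ∀ j : List Bool, j.length < k →
      ∃ a ∈ S j, ρ j a = 1 ∧ ∀ b ∈ S j, b ≠ a → ρ j b = 0 := by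

  intro j hj
  -- extend j to a leaf l
  set l : List Bool := j ++ List.replicate (k - j.length) false with hl
  have hlen : l.length = k := by
    simp [hl, Nat.add_sub_cancel' (le_of_lt hj)]
  have hi : j.length < k := hj
  set i : Fin k := ⟨j.length, hi⟩ with hidef
  have htake : l.take i.1 = j := by
    simp [hl, hidef, List.take_append]
  -- nonnegativity of x
  have hxnn : ∀ p ∈ DP k S l, 0 ≤ x l p := by
    intro p hp
    rcases hxbin l hlen p hp with h | h <;> simp [h]
  -- each p ∈ DP has p.1 i ∈ S j
  have hmem : ∀ p ∈ DP (F := F) (T := T) k S l, p.1 i ∈ S j := by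
    intro p hp
    simp only [DP, Finset.mem_product, Fintype.mem_piFinset] at hp
    have := hp.1 i
    rwa [htake] at this
  -- sum of ρ over S j equals 1
  have hsum : ∑ a ∈ S j, ρ j a = 1 := by
    have hg : ∀ a ∈ S j, ρ j a = ∑ p ∈ DP k S l, (if p.1 i = a then x l p else 0) := by
      intro a ha
      have h := hgamma l hlen i a (by rwa [htake])
      rw [htake] at h
      exact h.symm
    calc ∑ a ∈ S j, ρ j a
        = ∑ a ∈ S j, ∑ p ∈ DP k S l, (if p.1 i = a then x l p else 0) :=
          Finset.sum_congr rfl hg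
      _ = ∑ p ∈ DP k S l, ∑ a ∈ S j, (if p.1 i = a then x l p else 0) :=
          Finset.sum_comm
      _ = ∑ p ∈ DP k S l, x l p := by
          refine Finset.sum_congr rfl fun p hp => ?_
          rw [Finset.sum_ite_eq (S j) (p.1 i) (fun _ => x l p)]
          simp [hmem p hp]
      _ = 1 := halpha l hlen
  -- there is some a with ρ j a = 1
  have hex : ∃ a ∈ S j, ρ j a = 1 := by
    by_contra h
    push_neg at h
    have : ∀ a ∈ S j, ρ j a = 0 := by
      intro a ha
      rcases hρbin j hj a ha with h0 | h1
      · exact h0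
      · exact absurd h1 (h a ha)
    rw [Finset.sum_congr rfl this] at hsum
    simp at hsum
  obtain ⟨a, ha, ha1⟩ := hex
  refine ⟨a, ha, ha1, fun b hb hba => ?_⟩
  -- sum over the rest is 0, each term nonneg ⇒ each is 0
  have hrest : ∑ c ∈ (S j).erase a, ρ j c = 0 := by
    have := Finset.add_sum_erase (S j) (ρ j) ha
    rw [← this, ha1] at hsum
    linarith
  have hnn : ∀ c ∈ (S j).erase a, 0 ≤ ρ j c := by
    intro c hc
    rcases hρbin j hj c (Finset.mem_of_mem_erase hc) with h | h <;> simp [h]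
  have := (Finset.sum_eq_zero_iff_of_nonneg hnn).mp hrest
  exact this b (Finset.mem_erase.mpr ⟨hba, hb⟩)
end

section
/- Let R be a finite set of rows, each row r ∈ R having a feature vector v_r : F → ℝ. Suppose x_p ∈ {0,1} for every leaf l and every p ∈ DP_l, and ρ_{j,a} ∈ {0,1} for every internal node j and every a ∈ S_j, and that constraints (alpha) and (gamma) hold. Then for every row r ∈ R the constraint (beta) holds: ∑_{leaves l} ∑_{p ∈ DP_l such that v_r follows p} x_p = 1. Consequently, the binary feasible sets of the model with constraints (alpha), (beta), (gamma) and of the model with constraints (alpha), (gamma) only coincide. -/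
open Finset

attribute [local instance] Classical.propDecidable

/-- The leaves of the complete binary tree of depth `k`: Boolean strings of length `k`. -/
noncomputable def Leaves (k : ℕ) : Finset (List Bool) :=
  (Finset.univ : Finset (Fin k → Bool)).image List.ofFn

/-- A feature vector `v` follows a decision path `p` for leaf `l`: at every depth `i < k`,
`v` takes the left branch on the split check `p.1 i` (i.e. `v (p.1 i).1 ≤ (p.1 i).2`)
if and only if the node `l.take i` is a left child on the path to `l`
(i.e. the bit of `l` following it is `false`). -/
def Follows {F T : Type} (k : ℕ) (v : F → ℝ) (l : List Bool)
    (p : (Fin k → F × ℝ) × T) : Prop :=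
  ∀ i : Fin k, (v (p.1 i).1 ≤ (p.1 i).2 ↔ l.getD i.1 false = false)

/-- `x` and `ρ` are binary. -/
def BinaryXR {F T : Type} [Fintype T] (k : ℕ) (S : List Bool → Finset (F × ℝ))
    (x : List Bool → (Fin k → F × ℝ) × T → ℝ) (ρ : List Bool → F × ℝ → ℝ) : Prop :=
  (∀ l : List Bool, l.length = k → ∀ p ∈ DP k S l, x l p = 0 ∨ x l p = 1) ∧
  (∀ j : List Bool, j.length < k → ∀ a ∈ S j, ρ j a = 0 ∨ ρ j a = 1)

/-- Constraints (alpha). -/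
def AlphaC {F T : Type} [Fintype T] (k : ℕ) (S : List Bool → Finset (F × ℝ))
    (x : List Bool → (Fin k → F × ℝ) × T → ℝ) : Prop :=
  ∀ l : List Bool, l.length = k → ∑ p ∈ DP k S l, x l p = 1

/-- Constraints (gamma). -/
def GammaC {F T : Type} [Fintype T] (k : ℕ) (S : List Bool → Finset (F × ℝ))
    (x : List Bool → (Fin k → F × ℝ) × T → ℝ) (ρ : List Bool → F × ℝ → ℝ) : Prop :=
  ∀ l : List Bool, l.length = k → ∀ i : Fin k, ∀ a ∈ S (l.take i.1),
    ∑ p ∈ DP k S l, (if p.1 i = a then x l p else 0) = ρ (l.take i.1) a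

/-- Constraints (beta) for the rows indexed by the finite set `R`. -/
def BetaC {F T ι : Type} [Fintype T] (k : ℕ) (S : List Bool → Finset (F × ℝ))
    (R : Finset ι) (v : ι → F → ℝ)
    (x : List Bool → (Fin k → F × ℝ) × T → ℝ) : Prop :=
  ∀ r ∈ R, ∑ l ∈ Leaves k, ∑ p ∈ DP k S l,
    (if Follows k (v r) l p then x l p else 0) = 1

lemma sum_binary_one' {α : Type} (s : Finset α) (f : α → ℝ)
    (hb : ∀ a ∈ s, f a = 0 ∨ f a = 1) (h1 : ∑ a ∈ s, f a = 1) :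
    ∃ a, a ∈ s ∧ f a = 1 ∧ ∀ b ∈ s, f b = 1 → b = a := by
  classical
  have hex : ∃ a ∈ s, f a = 1 := by
    by_contra h
    push_neg at h
    have h0 : ∑ a ∈ s, f a = 0 :=
      Finset.sum_eq_zero fun a ha => (hb a ha).resolve_right (h a ha)
    rw [h0] at h1; norm_num at h1
  obtain ⟨a, has, hfa⟩ := hex
  refine ⟨a, has, hfa, fun b hbs hfb => ?_⟩
  by_contra hne
  have hsub : ({b, a} : Finset α) ⊆ s := by
    intro c hc; simp only [Finset.mem_insert, Finset.mem_singleton] at hc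
    rcases hc with h | h <;> simp [h, has, hbs]
  have h2 : ∑ c ∈ ({b, a} : Finset α), f c = 2 := by
    rw [Finset.sum_pair hne, hfa, hfb]; norm_num
  have hle : ∑ c ∈ ({b, a} : Finset α), f c ≤ ∑ c ∈ s, f c :=
    Finset.sum_le_sum_of_subset_of_nonneg hsub
      (fun c hc _ => by rcases hb c hc with h | h <;> rw [h] <;> norm_num)
  rw [h1, h2] at hle; norm_num at hle

lemma mem_Leaves' {k : ℕ} {l : List Bool} : l ∈ Leaves k ↔ l.length = k := by
  simp only [Leaves, Finset.mem_image, Finset.mem_univ, true_and]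
  constructor
  · rintro ⟨f, rfl⟩; simp
  · intro h; subst h; exact ⟨l.get, List.ofFn_get l⟩

lemma beta_one {F T : Type} [Nonempty F] [Fintype T] (k : ℕ)
    (S : List Bool → Finset (F × ℝ))
    (x : List Bool → (Fin k → F × ℝ) × T → ℝ)
    (ρ : List Bool → F × ℝ → ℝ)
    (hbin : BinaryXR k S x ρ) (halpha : AlphaC k S x) (hgamma : GammaC k S x ρ)
    (w : F → ℝ) :
    ∑ l ∈ Leaves k, ∑ p ∈ DP k S l, (if Follows k w l p then x l p else 0) = 1 := by
  classical
  obtain ⟨hbx, _⟩ := hbin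
  -- unique support path for each leaf
  have hpl : ∀ l : List Bool, l.length = k →
      ∃ p, p ∈ DP k S l ∧ x l p = 1 ∧ ∀ q ∈ DP k S l, x l q = 1 → q = p :=
    fun l hl => sum_binary_one' _ _ (hbx l hl) (halpha l hl)
  choose pl hmem hone huniq using hpl
  have hmemS : ∀ (l : List Bool) (hl : l.length = k) (i : Fin k),
      (pl l hl).1 i ∈ S (l.take i.1) := by
    intro l hl i
    have := hmem l hl
    simp only [DP, Finset.mem_product, Fintype.mem_piFinset] at this
    exact this.1 i
  -- ρ formula
  have hρ : ∀ (l : List Bool) (hl : l.length = k) (i : Fin k) (a : F × ℝ),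
      a ∈ S (l.take i.1) → ρ (l.take i.1) a = if (pl l hl).1 i = a then 1 else 0 := by
    intro l hl i a ha
    rw [← hgamma l hl i a ha,
      Finset.sum_eq_single_of_mem (pl l hl) (hmem l hl) ?_]
    · rw [hone l hl]
    · intro q hq hne
      rcases hbx l hl q hq with h0 | h1
      · rw [h0]; split <;> rfl
      · exact absurd (huniq l hl q hq h1) hne
  -- consistency across leaves sharing a prefix
  have hcons : ∀ (l l' : List Bool) (hl : l.length = k) (hl' : l'.length = k)
      (i : Fin k), l.take i.1 = l'.take i.1 → (pl l hl).1 i = (pl l' hl').1 i := by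
    intro l l' hl hl' i hpre
    have hm' : (pl l' hl').1 i ∈ S (l.take i.1) := by rw [hpre]; exact hmemS l' hl' i
    have h1 : ρ (l'.take i.1) ((pl l' hl').1 i) = 1 := by
      rw [hρ l' hl' i _ (hmemS l' hl' i), if_pos rfl]
    have h2 := hρ l hl i ((pl l' hl').1 i) hm'
    rw [hpre, h1] at h2
    by_contra hne
    rw [if_neg hne] at h2
    norm_num at h2
  -- the split chosen at each node, as a function of the node
  obtain ⟨A, hA⟩ : ∃ A : List Bool → F × ℝ,
      ∀ (l : List Bool) (hl : l.length = k) (i : Fin k), (pl l hl).1 i = A (l.take i.1) := by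
    refine ⟨fun j => if h : j.length < k then
      (pl (j ++ List.replicate (k - j.length) false)
        (by simp [List.length_append]; omega)).1 ⟨j.length, h⟩
      else Classical.arbitrary _, ?_⟩
    intro l hl i
    have hjlen : (l.take i.1).length = i.1 := by
      rw [List.length_take]; omega
    have hjk : (l.take i.1).length < k := by omega
    dsimp only
    rw [dif_pos hjk]
    have hfin : (⟨(l.take i.1).length, hjk⟩ : Fin k) = i := Fin.ext hjlen
    rw [hfin]
    refine hcons l _ hl _ i ?_
    rw [List.take_append_of_le_length (by omega), List.take_take]
    congr 1
    omega
  -- the branch taken by w at each node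
  obtain ⟨g, hg⟩ : ∃ g : List Bool → Bool,
      ∀ j, g j = false ↔ w (A j).1 ≤ (A j).2 :=
    ⟨fun j => if w (A j).1 ≤ (A j).2 then false else true,
     fun j => by by_cases h : w (A j).1 ≤ (A j).2 <;> simp [h]⟩
  -- the leaf that w is routed to
  obtain ⟨ls, hls0, hlss, hlsl⟩ : ∃ ls : ℕ → List Bool, ls 0 = [] ∧
      (∀ n, ls (n + 1) = ls n ++ [g (ls n)]) ∧ ∀ n, (ls n).length = n := by
    refine ⟨fun n => Nat.rec [] (fun _ prev => prev ++ [g prev]) n, rfl, fun n => rfl, ?_⟩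
    intro n
    induction n with
    | zero => rfl
    | succ n ih => simpa using ih
  have hls_take : ∀ m n, n ≤ m → (ls m).take n = ls n := by
    intro m
    induction m with
    | zero => intro n hn; interval_cases n; simp [hls0]
    | succ m ih =>
      intro n hn
      rcases Nat.lt_or_ge n (m + 1) with h | h
      · rw [hlss, List.take_append_of_le_length (by rw [hlsl]; omega)]
        exact ih n (by omega)
      · have : n = m + 1 := by omega
        subst this
        exact List.take_of_length_le (by rw [hlsl])
  have hls_getD : ∀ n, n < k → (ls k).getD n false = g (ls n) := by
    intro n hn
    have h1 : ls k = ls (n + 1) ++ (ls k).drop (n + 1) := by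
      conv_lhs => rw [← List.take_append_drop (n + 1) (ls k)]
      rw [hls_take k (n + 1) hn]
    rw [h1, List.getD_append _ _ _ n (by rw [hlsl]; omega), hlss,
      List.getD_append_right _ _ _ _ (by rw [hlsl])]
    simp [hlsl]
  -- key equivalence
  have hfoll : ∀ (l : List Bool) (hl : l.length = k),
      (Follows k w l (pl l hl) ↔ l = ls k) := by
    intro l hl
    constructor
    · intro hf
      have key : ∀ n, n ≤ k → l.take n = ls n := by
        intro n
        induction n with
        | zero => intro _; simp [hls0]
        | succ n ih =>
          intro hn
          have hn' : n < k := by omega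
          have hbit : l.getD n false = g (l.take n) := by
            have hA' : (pl l hl).1 ⟨n, hn'⟩ = A (l.take n) := hA l hl ⟨n, hn'⟩
            have h : w (A (l.take n)).1 ≤ (A (l.take n)).2 ↔ l.getD n false = false := by
              have h0 := hf ⟨n, hn'⟩
              rwa [hA'] at h0
            rcases Bool.eq_false_or_eq_true (l.getD n false) with hb | hb
            · rw [hb]
              rcases Bool.eq_false_or_eq_true (g (l.take n)) with hgb | hgb
              · exact hgb.symm
              · rw [h.mp ((hg _).mp hgb)] at hb
                simp at hb
            · rw [hb]
              exact ((hg _).mpr (h.mpr hb)).symm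
          have ht : l.take (n + 1) = l.take n ++ [l.getD n false] := by
            rw [List.take_succ, List.getElem?_eq_getElem (by omega),
              List.getD_eq_getElem l false (by omega)]
            rfl
          rw [ht, hbit, ih (by omega), hlss]
      have hkey := key k le_rfl
      rwa [List.take_of_length_le (le_of_eq hl)] at hkey
    · intro hl2 i
      rw [hA l hl i]
      have htake : l.take i.1 = ls i.1 := by rw [hl2]; exact hls_take k i.1 i.2.le
      have hbit : l.getD i.1 false = g (ls i.1) := by rw [hl2]; exact hls_getD i.1 i.2
      rw [htake, hbit]
      exact (hg (ls i.1)).symm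
  -- assemble
  have hlsk : ls k ∈ Leaves k := mem_Leaves'.2 (hlsl k)
  have hinner : ∀ l ∈ Leaves k,
      (∑ p ∈ DP k S l, if Follows k w l p then x l p else 0)
        = if l = ls k then 1 else 0 := by
    intro l hl0
    have hl : l.length = k := mem_Leaves'.1 hl0
    have hterm : ∀ p ∈ DP k S l,
        (if Follows k w l p then x l p else 0) = (if l = ls k then x l p else 0) := by
      intro p hp
      rcases hbx l hl p hp with h0 | h1
      · rw [h0]; split <;> split <;> rfl
      · have hppl := huniq l hl p hp h1
        have hiff : Follows k w l p ↔ l = ls k := by rw [hppl]; exact hfoll l hl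
        by_cases hc : l = ls k
        · rw [if_pos (hiff.2 hc), if_pos hc]
        · rw [if_neg (fun hf => hc (hiff.1 hf)), if_neg hc]
    rw [Finset.sum_congr rfl hterm]
    by_cases h : l = ls k
    · simp only [if_pos h]
      exact halpha l hl
    · simp [h]
  rw [Finset.sum_congr rfl hinner, Finset.sum_ite_eq' (Leaves k) (ls k), if_pos hlsk]

/-- Theorem 1: if `x, ρ` are binary and satisfy constraints (alpha) and (gamma), then the
data-dependent constraints (beta) hold for every row of the dataset; consequently, the
binary feasible set of the model with constraints (alpha), (beta), (gamma) coincides with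
that of the model with constraints (alpha), (gamma) only. -/
theorem stmt2 {F T ι : Type} [Fintype F] [Nonempty F] [Fintype T] [Nonempty T]
    (k : ℕ) (hk : 1 ≤ k)
    (S : List Bool → Finset (F × ℝ))
    (hS : ∀ j : List Bool, j.length < k → (S j).Nonempty)
    (R : Finset ι) (v : ι → F → ℝ)
    (x : List Bool → (Fin k → F × ℝ) × T → ℝ)
    (ρ : List Bool → F × ℝ → ℝ)
    (hbin : BinaryXR k S x ρ)
    (halpha : AlphaC k S x)
    (hgamma : GammaC k S x ρ) :
    (∀ r ∈ R, ∑ l ∈ Leaves k, ∑ p ∈ DP k S l,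
        (if Follows k (v r) l p then x l p else 0) = 1) ∧
    ({q : (List Bool → (Fin k → F × ℝ) × T → ℝ) × (List Bool → F × ℝ → ℝ) |
        BinaryXR k S q.1 q.2 ∧ AlphaC k S q.1 ∧ BetaC k S R v q.1 ∧ GammaC k S q.1 q.2} =
     {q : (List Bool → (Fin k → F × ℝ) × T → ℝ) × (List Bool → F × ℝ → ℝ) |
        BinaryXR k S q.1 q.2 ∧ AlphaC k S q.1 ∧ GammaC k S q.1 q.2}) := by
  refine ⟨fun r _ => beta_one k S x ρ hbin halpha hgamma (v r), ?_⟩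
  ext q
  simp only [Set.mem_setOf_eq]
  constructor
  · rintro ⟨h1, h2, _, h4⟩
    exact ⟨h1, h2, h4⟩
  · rintro ⟨h1, h2, h4⟩
    exact ⟨h1, h2, fun r _ => beta_one k S q.1 q.2 h1 h2 h4 (v r), h4⟩
end

section
/- Suppose x_p ∈ {0,1} for every leaf l and every p ∈ DP_l, and ρ_{j,a} ∈ {0,1} for every internal node j and every a ∈ S_j, and that constraints (alpha) and (gamma) hold. If p ∈ DP_l and q ∈ DP_{l'} satisfy x_p = 1 and x_q = 1, then for every common node j ∈ p_BT(l) ∩ p_BT(l') one has s_p(j) = s_q(j); that is, the selected paths are consistent with each other and describe a valid decision tree. -/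
open Finset

attribute [local instance] Classical.propDecidable

/-! If two selected paths disagreed at a common node `j`, gamma at the two leaves would give
`ρ(j, s_p(j)) ≥ x_p = 1` and `ρ(j, s_q(j)) ≥ x_q = 1`, while at the leaf of `q` the two gamma
sums run over disjoint sets of paths, so alpha bounds `ρ(j, s_p(j)) + ρ(j, s_q(j))` by `1`. -/

section SumIte

variable {α β M : Type*} [AddCommMonoid M] [PartialOrder M] [IsOrderedAddMonoid M]
  {s : Finset α} {f : α → M} [DecidableEq β]

theorem Finset.le_sum_ite_eq_apply (hf : ∀ r ∈ s, 0 ≤ f r) (g : α → β) {r : α} (hr : r ∈ s) :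
    f r ≤ ∑ r' ∈ s, if g r' = g r then f r' else 0 := by
  simpa using Finset.single_le_sum (f := fun r' => if g r' = g r then f r' else 0)
    (fun r' hr' => by split_ifs <;> simp [hf r' hr']) hr

theorem Finset.sum_ite_eq_add_sum_ite_eq_le (hf : ∀ r ∈ s, 0 ≤ f r) (g : α → β) {b c : β}
    (hbc : b ≠ c) :
    (∑ r ∈ s, if g r = b then f r else 0) + (∑ r ∈ s, if g r = c then f r else 0) ≤
      ∑ r ∈ s, f r := by
  rw [← Finset.sum_add_distrib]
  refine Finset.sum_le_sum fun r hr => ?_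
  by_cases hb : g r = b
  · simp [hb, hbc]
  · split_ifs <;> simp [hf r hr]

end SumIte

theorem apply_mem_of_mem_DP {F T : Type} [Fintype T] {k : ℕ} {S : List Bool → Finset (F × ℝ)}
    {l : List Bool} {p : (Fin k → F × ℝ) × T} (hp : p ∈ DP k S l) (i : Fin k) :
    p.1 i ∈ S (l.take i.1) :=
  Fintype.mem_piFinset.mp (Finset.mem_product.mp hp).1 i

theorem stmt4_general {F T : Type} [Fintype T]
    (k : ℕ)
    (S : List Bool → Finset (F × ℝ))
    (x : List Bool → (Fin k → F × ℝ) × T → ℝ)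
    (ρ : List Bool → F × ℝ → ℝ)
    -- x is binary
    (hxbin : ∀ l : List Bool, l.length = k → ∀ p ∈ DP k S l, x l p = 0 ∨ x l p = 1)
    -- constraints (alpha)
    (halpha : ∀ l : List Bool, l.length = k → ∑ p ∈ DP k S l, x l p = 1)
    -- constraints (gamma)
    (hgamma : ∀ l : List Bool, l.length = k → ∀ i : Fin k, ∀ a ∈ S (l.take i.1),
      ∑ p ∈ DP k S l, (if p.1 i = a then x l p else 0) = ρ (l.take i.1) a)
    (l l' : List Bool) (hl : l.length = k) (hl' : l'.length = k)
    (p q : (Fin k → F × ℝ) × T)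
    (hp : p ∈ DP k S l) (hq : q ∈ DP k S l')
    (hxp : x l p = 1) (hxq : x l' q = 1) :
    ∀ i : Fin k, l.take i.1 = l'.take i.1 → p.1 i = q.1 i := by
  intro i hil
  by_contra hne
  have hx_nonneg : ∀ l, l.length = k → ∀ r ∈ DP k S l, 0 ≤ x l r := fun l hl r hr => by
    rcases hxbin l hl r hr with h | h <;> simp [h]
  have hx_le_ρ : ∀ l, l.length = k → ∀ r ∈ DP k S l, x l r ≤ ρ (l.take i.1) (r.1 i) :=
    fun l hl r hr => hgamma l hl i _ (apply_mem_of_mem_DP hr i) ▸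
      Finset.le_sum_ite_eq_apply (hx_nonneg l hl) (fun r' => r'.1 i) hr
  have hρp : 1 ≤ ρ (l'.take i.1) (p.1 i) := hil ▸ hxp ▸ hx_le_ρ l hl p hp
  have hρq : 1 ≤ ρ (l'.take i.1) (q.1 i) := hxq ▸ hx_le_ρ l' hl' q hq
  have hsum : ρ (l'.take i.1) (p.1 i) + ρ (l'.take i.1) (q.1 i) ≤ 1 := by
    rw [← hgamma l' hl' i _ (hil ▸ apply_mem_of_mem_DP hp i),
      ← hgamma l' hl' i _ (apply_mem_of_mem_DP hq i), ← halpha l' hl']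
    exact Finset.sum_ite_eq_add_sum_ite_eq_le (hx_nonneg l' hl') (fun r => r.1 i) hne
  linarith

/-- If `x, ρ` are binary and satisfy constraints (alpha) and (gamma), then any two
selected paths (`x = 1`) assign the same split check to every common node: for leaves
`l, l'` and a common proper prefix `l.take i = l'.take i`, the split checks assigned at
that node coincide. That is, the selected paths are consistent and describe a valid
decision tree. -/
theorem stmt4 {F T : Type} [Fintype F] [Nonempty F] [Fintype T] [Nonempty T]
    (k : ℕ) (hk : 1 ≤ k)
    (S : List Bool → Finset (F × ℝ))
    (hS : ∀ j : List Bool, j.length < k → (S j).Nonempty)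
    (x : List Bool → (Fin k → F × ℝ) × T → ℝ)
    (ρ : List Bool → F × ℝ → ℝ)
    -- x is binary
    (hxbin : ∀ l : List Bool, l.length = k → ∀ p ∈ DP k S l, x l p = 0 ∨ x l p = 1)
    -- ρ is binary
    (hρbin : ∀ j : List Bool, j.length < k → ∀ a ∈ S j, ρ j a = 0 ∨ ρ j a = 1)
    -- constraints (alpha)
    (halpha : ∀ l : List Bool, l.length = k → ∑ p ∈ DP k S l, x l p = 1)
    -- constraints (gamma)
    (hgamma : ∀ l : List Bool, l.length = k → ∀ i : Fin k, ∀ a ∈ S (l.take i.1),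
      ∑ p ∈ DP k S l, (if p.1 i = a then x l p else 0) = ρ (l.take i.1) a)
    (l l' : List Bool) (hl : l.length = k) (hl' : l'.length = k)
    (p q : (Fin k → F × ℝ) × T)
    (hp : p ∈ DP k S l) (hq : q ∈ DP k S l')
    (hxp : x l p = 1) (hxq : x l' q = 1) :
    ∀ i : Fin k, l.take i.1 = l'.take i.1 → p.1 i = q.1 i :=
  stmt4_general k S x ρ hxbin halpha hgamma l l' hl hl' p q hp hq hxp hxq
end

section
/- Fix a leaf l (so p_BT(l) has exactly k elements, partitioned into LC(l) and RC(l)). Let u_{j,a} ∈ {0,1} for every j ∈ p_BT(l) and a ∈ S_j satisfy ∑_{a∈S_j} u_{j,a} = 1 for every j ∈ p_BT(l). Let r be a row with feature vector v_r : F → ℝ, and set T(r) = {split checks a : v_r(f_a) ≤ μ_a} and F(r) = {split checks a : v_r(f_a) > μ_a}. Suppose y_r ∈ {0,1} satisfies: y_r ≤ ∑_{a∈S_j∩T(r)} u_{j,a} for every j ∈ LC(l); y_r ≤ ∑_{a∈S_j∩F(r)} u_{j,a} for every j ∈ RC(l); and ∑_{j∈LC(l)} ∑_{a∈S_j∩T(r)}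 u_{j,a} + ∑_{j∈RC(l)} ∑_{a∈S_j∩F(r)} u_{j,a} − (k−1) ≤ y_r. Then y_r = 1 if and only if for every j ∈ LC(l) the unique split check a with u_{j,a} = 1 belongs to T(r) and for every j ∈ RC(l) the unique split check a with u_{j,a} = 1 belongs to F(r); i.e., y_r indicates whether row r reaches leaf l under the split checks selected by u. -/
open Finset

attribute [local instance] Classical.propDecidable


private lemma aux_filter_sum {α : Type*} (s : Finset α) (u : α → ℝ)
    (hb : ∀ a ∈ s, u a = 0 ∨ u a = 1) (hs : ∑ a ∈ s, u a = 1)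
    (p : α → Prop) [DecidablePred p] :
    ((∑ a ∈ s.filter p, u a) = 1 ∧ ∀ a ∈ s, u a = 1 → p a) ∨
    ((∑ a ∈ s.filter p, u a) = 0 ∧ ∃ a ∈ s, u a = 1 ∧ ¬ p a) := by
  have hexists : ∃ a ∈ s, u a ≠ 0 := by
    by_contra h
    push_neg at h
    have : ∑ a ∈ s, u a = 0 := Finset.sum_eq_zero h
    rw [this] at hs; norm_num at hs
  obtain ⟨a₀, ha₀s, ha₀⟩ := hexists
  have h1 : u a₀ = 1 := (hb a₀ ha₀s).resolve_left ha₀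
  have hzero : ∀ b ∈ s, b ≠ a₀ → u b = 0 := by
    have hsplit : ∑ a ∈ s \ {a₀}, u a + u a₀ = 1 := by
      rw [Finset.sum_sdiff_eq_sub (by simpa using ha₀s), Finset.sum_singleton] at *
      linarith [hs]
    have hz : ∑ a ∈ s \ {a₀}, u a = 0 := by linarith
    intro b hbs hne
    have hnn : ∀ a ∈ s \ {a₀}, 0 ≤ u a := by
      intro a ha
      rcases hb a (Finset.mem_sdiff.mp ha).1 with h | h <;> simp [h]
    have := (Finset.sum_eq_zero_iff_of_nonneg hnn).mp hz b (by simp [hbs, hne])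
    exact this
  have hfs : ∑ a ∈ s.filter p, u a = if p a₀ then 1 else 0 := by
    have : ∑ a ∈ s.filter p, u a = ∑ a ∈ s.filter p, (if a = a₀ then (1:ℝ) else 0) := by
      refine Finset.sum_congr rfl fun a ha => ?_
      by_cases hh : a = a₀
      · simp [hh, h1]
      · simp [hh, hzero a (Finset.mem_filter.mp ha).1 hh]
    rw [this, Finset.sum_ite_eq' (s.filter p) a₀ (fun _ => (1:ℝ))]
    by_cases hp : p a₀ <;> simp [hp, Finset.mem_filter, ha₀s]
  by_cases hp : p a₀
  · left
    refine ⟨by rw [hfs]; simp [hp], fun a ha hua => ?_⟩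
    by_cases hh : a = a₀
    · rwa [hh]
    · exact absurd (hzero a ha hh) (by rw [hua]; norm_num)
  · right
    exact ⟨by rw [hfs]; simp [hp], a₀, ha₀s, h1, hp⟩

/-- Correctness of constraints (14b)-(14d) of the subproblem for a fixed leaf `l`
(a Boolean string of length `k`): `p_BT(l)` consists of the nodes `l.take i` (`i < k`),
a node being in `LC(l)` when the bit `l.getD i false` following it is `false` and in
`RC(l)` when it is `true`.  `T(r)` is the set of split checks on which the row takes the
left branch (`v a.1 ≤ a.2`) and `F(r)` the set of those on which it takes the right
branch (`a.2 < v a.1`).  If the binary variables `u` select exactly one split check per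
node of the path and the binary variable `y` satisfies the three families of linear
constraints, then `y = 1` iff for every node of the path the selected split check lies
in `T(r)` (for left children) resp. `F(r)` (for right children), i.e. `y` indicates
whether the row reaches leaf `l`. -/
theorem stmt6 {F : Type} [Fintype F] [Nonempty F]
    (k : ℕ) (hk : 1 ≤ k)
    (S : List Bool → Finset (F × ℝ))
    (hS : ∀ j : List Bool, j.length < k → (S j).Nonempty)
    (l : List Bool) (hl : l.length = k)
    (u : List Bool → F × ℝ → ℝ)
    -- u is binary
    (hubin : ∀ i : Fin k, ∀ a ∈ S (l.take i.1), u (l.take i.1) a = 0 ∨ u (l.take i.1) a = 1)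
    -- exactly one split check is selected at each node of the path
    (husum : ∀ i : Fin k, ∑ a ∈ S (l.take i.1), u (l.take i.1) a = 1)
    (v : F → ℝ) (y : ℝ)
    -- y is binary
    (hybin : y = 0 ∨ y = 1)
    -- y ≤ ∑_{a ∈ S_j ∩ T(r)} u_{j,a} for every j ∈ LC(l)
    (hLC : ∀ i : Fin k, l.getD i.1 false = false →
      y ≤ ∑ a ∈ (S (l.take i.1)).filter (fun a => v a.1 ≤ a.2), u (l.take i.1) a)
    -- y ≤ ∑_{a ∈ S_j ∩ F(r)} u_{j,a} for every j ∈ RC(l)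
    (hRC : ∀ i : Fin k, l.getD i.1 false = true →
      y ≤ ∑ a ∈ (S (l.take i.1)).filter (fun a => a.2 < v a.1), u (l.take i.1) a)
    -- ∑_{j ∈ LC(l)} ∑_{a ∈ S_j ∩ T(r)} u_{j,a} + ∑_{j ∈ RC(l)} ∑_{a ∈ S_j ∩ F(r)} u_{j,a} − (k−1) ≤ y
    (hbig : (∑ i : Fin k,
        if l.getD i.1 false = false
        then ∑ a ∈ (S (l.take i.1)).filter (fun a => v a.1 ≤ a.2), u (l.take i.1) a
        else ∑ a ∈ (S (l.take i.1)).filter (fun a => a.2 < v a.1), u (l.take i.1) a)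
        - ((k : ℝ) - 1) ≤ y) :
    y = 1 ↔ ∀ i : Fin k, ∀ a ∈ S (l.take i.1), u (l.take i.1) a = 1 →
      (v a.1 ≤ a.2 ↔ l.getD i.1 false = false) := by
  constructor
  · intro hy i a ha hua
    by_cases hbit : l.getD i.1 false = false
    · have hle := hLC i hbit
      rw [hy] at hle
      rcases aux_filter_sum (S (l.take i.1)) (u (l.take i.1)) (hubin i) (husum i)
        (fun a => v a.1 ≤ a.2) with ⟨h1, hall⟩ | ⟨h0, _⟩
      · exact iff_of_true (hall a ha hua) hbit
      · rw [h0] at hle; norm_num at hle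
    · have hbit' : l.getD i.1 false = true := by
        cases h : l.getD i.1 false <;> simp_all
      have hle := hRC i hbit'
      rw [hy] at hle
      rcases aux_filter_sum (S (l.take i.1)) (u (l.take i.1)) (hubin i) (husum i)
        (fun a => a.2 < v a.1) with ⟨h1, hall⟩ | ⟨h0, _⟩
      · simp only [hbit', Bool.true_eq_false, iff_false, not_le]
        exact hall a ha hua
      · rw [h0] at hle; norm_num at hle
  · intro H
    have hone : ∀ i : Fin k,
        (if l.getD i.1 false = false
        then ∑ a ∈ (S (l.take i.1)).filter (fun a => v a.1 ≤ a.2), u (l.take i.1) a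
        else ∑ a ∈ (S (l.take i.1)).filter (fun a => a.2 < v a.1), u (l.take i.1) a) = 1 := by
      intro i
      by_cases hbit : l.getD i.1 false = false
      · simp only [hbit, if_true]
        rcases aux_filter_sum (S (l.take i.1)) (u (l.take i.1)) (hubin i) (husum i)
          (fun a => v a.1 ≤ a.2) with ⟨h1, _⟩ | ⟨_, a, ha, hua, hnp⟩
        · exact h1
        · exact absurd ((H i a ha hua).mpr hbit) hnp
      · simp only [hbit, if_false]
        rcases aux_filter_sum (S (l.take i.1)) (u (l.take i.1)) (hubin i) (husum i)
          (fun a => a.2 < v a.1) with ⟨h1, _⟩ | ⟨_, a, ha, hua, hnp⟩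
        · exact h1
        · have : v a.1 ≤ a.2 := not_lt.mp hnp
          exact absurd ((H i a ha hua).mp this) hbit
    have hsum : (∑ i : Fin k,
        if l.getD i.1 false = false
        then ∑ a ∈ (S (l.take i.1)).filter (fun a => v a.1 ≤ a.2), u (l.take i.1) a
        else ∑ a ∈ (S (l.take i.1)).filter (fun a => a.2 < v a.1), u (l.take i.1) a) = k := by
      rw [Finset.sum_congr rfl (fun i _ => hone i)]
      simp
    rw [hsum] at hbig
    rcases hybin with h0 | h1
    · rw [h0] at hbig; linarith
    · exact h1
end

section
/- Let DP be a finite set of paths, where each p ∈ DP is given by two finite disjoint sets L_p and R_p of split checks (the split checks on which the path takes the left, respectively right, branch) together with a real value x*_p, and let S = ⋃_{p∈DP} (L_p ∪ R_p). Say that ψ : S → Bool agrees with p if ψ(a) = false for all a ∈ L_p and ψ(a) = true for all a ∈ R_p, and that a feature vector v : F → ℝ follows p if v takes the left branch on every a ∈ L_p and the right branch on every a ∈ R_p. Then there exists a feature vector v with ∑_{p∈DP : v follows p} x*_p > 1 if and only if there exists ψ : S → Bool satisfying the consistency condition (for all a, b ∈ S with f_a = f_b and μ_a ≤ μ_b,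 ψ(a) = false implies ψ(b) = false) with ∑_{p∈DP : ψ agrees with p} x*_p > 1. -/
open Finset

attribute [local instance] Classical.propDecidable

/-- Correctness of the separation model for generating violated (beta) cuts for
unlabeled rows.  `P` is the (finite) set of paths of the current fractional solution;
path `p` takes the left branch on the split checks in `L p`, the right branch on those
in `R p`, and carries the value `xstar p` of its variable.  A feature vector `v` follows
`p` if `v a.1 ≤ a.2` for all `a ∈ L p` and `a.2 < v a.1` for all `a ∈ R p`; a branch
assignment `ψ` (with `ψ a = true` meaning the right branch is taken on `a`) agrees with
`p` if `ψ = false` on `L p` and `ψ = true` on `R p`.  Then some unlabeled row yields a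
violated upper-bound cut (total followed value `> 1`) iff the separation model has a
consistent solution `ψ` of value `> 1`. -/
theorem stmt8 {F P : Type} [Fintype F] [Nonempty F] [DecidableEq F] [Fintype P]
    (L R : P → Finset (F × ℝ))
    (hdisj : ∀ p : P, Disjoint (L p) (R p))
    (xstar : P → ℝ) :
    (∃ v : F → ℝ, 1 < ∑ p : P,
        (if (∀ a ∈ L p, v a.1 ≤ a.2) ∧ (∀ a ∈ R p, a.2 < v a.1) then xstar p else 0)) ↔
    (∃ ψ : F × ℝ → Bool,
      (∀ a ∈ Finset.univ.biUnion (fun p : P => L p ∪ R p),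
       ∀ b ∈ Finset.univ.biUnion (fun p : P => L p ∪ R p),
        a.1 = b.1 → a.2 ≤ b.2 → ψ a = false → ψ b = false) ∧
      1 < ∑ p : P,
        (if (∀ a ∈ L p, ψ a = false) ∧ (∀ a ∈ R p, ψ a = true) then xstar p else 0)) := by
  classical
  constructor
  · rintro ⟨v, hv⟩
    refine ⟨fun a => decide (a.2 < v a.1), ?_, ?_⟩
    · intro a _ b _ hf hμ ha
      simp only [decide_eq_false_iff_not, not_lt] at ha ⊢
      rw [← hf]; exact le_trans ha hμ
    · have : ∀ p : P,
          (if (∀ a ∈ L p, (fun a : F × ℝ => decide (a.2 < v a.1)) a = false) ∧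
              (∀ a ∈ R p, (fun a : F × ℝ => decide (a.2 < v a.1)) a = true)
           then xstar p else 0)
          = (if (∀ a ∈ L p, v a.1 ≤ a.2) ∧ (∀ a ∈ R p, a.2 < v a.1)
             then xstar p else 0) := by
        intro p
        refine if_congr ?_ rfl rfl
        simp [decide_eq_false_iff_not, not_lt]
      rw [Finset.sum_congr rfl (fun p _ => this p)]
      exact hv
  · rintro ⟨ψ, hcons, hψ⟩
    set S : Finset (F × ℝ) := Finset.univ.biUnion (fun p : P => L p ∪ R p) with hS
    set Sf : F → Finset (F × ℝ) :=
      fun f => S.filter (fun a => a.1 = f ∧ ψ a = false) with hSf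
    set Af : F → Finset (F × ℝ) := fun f => S.filter (fun a => a.1 = f) with hAf
    set v : F → ℝ := fun f =>
      if h : (Sf f).Nonempty then ((Sf f).image Prod.snd).min' (h.image _)
      else if h2 : (Af f).Nonempty then ((Af f).image Prod.snd).max' (h2.image _) + 1
      else 0 with hv
    have key : ∀ a ∈ S, (v a.1 ≤ a.2 ↔ ψ a = false) := by
      intro a haS
      constructor
      · intro hle
        by_contra hfa
        have hat : ψ a = true := by
          cases h : ψ a with
          | false => exact absurd h hfa
          | true => rfl
        by_cases h : (Sf a.1).Nonempty
        · -- v a.1 = min of false thresholds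
          rw [hv] at hle
          simp only [dif_pos h] at hle
          obtain ⟨μ, hμmem, hμeq⟩ :=
            Finset.mem_image.mp (((Sf a.1).image Prod.snd).min'_mem (h.image _))
          rw [← hμeq] at hle
          have hμS : μ ∈ S := (Finset.mem_filter.mp hμmem).1
          have hμprop := (Finset.mem_filter.mp hμmem).2
          have := hcons μ hμS a haS hμprop.1 hle hμprop.2
          rw [hat] at this; exact Bool.true_eq_false.mp this
        · have haA : a ∈ Af a.1 := Finset.mem_filter.mpr ⟨haS, rfl⟩
          have h2 : (Af a.1).Nonempty := ⟨a, haA⟩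
          rw [hv] at hle
          simp only [dif_neg h, dif_pos h2] at hle
          have hmax : a.2 ≤ ((Af a.1).image Prod.snd).max' (h2.image _) :=
            Finset.le_max' _ _ (Finset.mem_image_of_mem _ haA)
          linarith
      · intro hfa
        have haSf : a ∈ Sf a.1 := Finset.mem_filter.mpr ⟨haS, rfl, hfa⟩
        have h : (Sf a.1).Nonempty := ⟨a, haSf⟩
        rw [hv]
        simp only [dif_pos h]
        exact Finset.min'_le _ _ (Finset.mem_image_of_mem _ haSf)
    refine ⟨v, ?_⟩
    have : ∀ p : P,
        (if (∀ a ∈ L p, v a.1 ≤ a.2) ∧ (∀ a ∈ R p, a.2 < v a.1) then xstar p else 0)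
        = (if (∀ a ∈ L p, ψ a = false) ∧ (∀ a ∈ R p, ψ a = true) then xstar p else 0) := by
      intro p
      refine if_congr (and_congr ?_ ?_) rfl rfl
      · refine forall₂_congr (fun a ha => ?_)
        exact key a (Finset.mem_biUnion.mpr ⟨p, Finset.mem_univ p,
          Finset.mem_union_left _ ha⟩)
      · refine forall₂_congr (fun a ha => ?_)
        have := key a (Finset.mem_biUnion.mpr ⟨p, Finset.mem_univ p,
          Finset.mem_union_right _ ha⟩)
        rw [← not_le, this]
        simp
    rw [Finset.sum_congr rfl (fun p _ => this p)]
    exact hψ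
end

section
/- Say that an internal node j is reachable by a row r if there exists an assignment choosing for every proper prefix j' of j a split check σ(j') ∈ S_{j'} such that, for every proper prefix j' of j, the bit of j immediately following j' is false if and only if v_r takes the left branch on σ(j'). Let r₁ and r₂ be rows such that for every internal node j reachable by r₁ and every split check a ∈ S_j, r₁ and r₂ take the same branch on a. Then (i) an internal node is reachable by r₁ if and only if it is reachable by r₂, and (ii) for every assignment σ choosing σ(j) ∈ S_j for every internal node j, rows r₁ and r₂ reach the same leaf of the tree under σ. -/
open Finset

/-- The internal node `j` (a Boolean string of length `< k`) is reachable by a row with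
feature vector `v`: there is a choice `σ` of a split check `σ j' ∈ S j'` for every proper
prefix `j' = j.take i` (`i < j.length`) of `j` such that the bit of `j` immediately
following `j'` is `false` iff `v` takes the left branch on `σ j'`
(i.e. `v (σ j').1 ≤ (σ j').2`). -/
def ReachableNode {F : Type} (S : List Bool → Finset (F × ℝ)) (v : F → ℝ)
    (j : List Bool) : Prop :=
  ∃ σ : List Bool → F × ℝ,
    (∀ i : ℕ, i < j.length → σ (j.take i) ∈ S (j.take i)) ∧
    (∀ i : ℕ, i < j.length →
      (j.getD i false = false ↔ v (σ (j.take i)).1 ≤ (σ (j.take i)).2))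

/-- A row with feature vector `v` reaches the leaf `l` (a Boolean string of length `k`)
under the per-node assignment `σ` of split checks: for every proper prefix `l.take i`
(`i < k`) of `l`, the bit of `l` immediately following it is `false` iff `v` takes the
left branch on `σ (l.take i)`. -/
def ReachesLeaf {F : Type} (k : ℕ) (v : F → ℝ) (σ : List Bool → F × ℝ)
    (l : List Bool) : Prop :=
  l.length = k ∧ ∀ i : Fin k,
    (l.getD i.1 false = false ↔ v (σ (l.take i.1)).1 ≤ (σ (l.take i.1)).2)

/-- Justification of the row-merging preprocessing step: if rows `r₁` and `r₂` take the
same branch on every candidate split check of every internal node reachable by `r₁`,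
then (i) a node is reachable by `r₁` iff it is reachable by `r₂`, and (ii) under any
per-node assignment of split checks, `r₁` and `r₂` reach the same leaf of the tree. -/
theorem stmt9 {F : Type} [Fintype F] [Nonempty F]
    (k : ℕ) (hk : 1 ≤ k)
    (S : List Bool → Finset (F × ℝ))
    (hS : ∀ j : List Bool, j.length < k → (S j).Nonempty)
    (v₁ v₂ : F → ℝ)
    (hagree : ∀ j : List Bool, j.length < k → ReachableNode S v₁ j →
      ∀ a ∈ S j, (v₁ a.1 ≤ a.2 ↔ v₂ a.1 ≤ a.2)) :
    (∀ j : List Bool, j.length < k → (ReachableNode S v₁ j ↔ ReachableNode S v₂ j)) ∧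
    (∀ σ : List Bool → F × ℝ, (∀ j : List Bool, j.length < k → σ j ∈ S j) →
      ∀ l : List Bool, l.length = k →
        (ReachesLeaf k v₁ σ l ↔ ReachesLeaf k v₂ σ l)) := by
  classical
  -- prefixes of reachable nodes are reachable
  have hpre : ∀ (v : F → ℝ) (j : List Bool), ReachableNode S v j →
      ∀ i, i ≤ j.length → ReachableNode S v (j.take i) := by
    rintro v j ⟨σ, h1, h2⟩ i hi
    refine ⟨σ, ?_, ?_⟩ <;> intro m hm <;>
      rw [List.length_take] at hm <;>
      have hmi : m < i := lt_of_lt_of_le hm (min_le_left _ _) <;>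
      have hmj : m < j.length := lt_of_lt_of_le hm (min_le_right _ _)
    · rw [List.take_take, min_eq_left hmi.le]
      exact h1 m hmj
    · rw [List.take_take, min_eq_left hmi.le,
        show (j.take i).getD m false = j.getD m false by
          simp [List.getD_eq_getElem?_getD, List.getElem?_take, hmi]]
      exact h2 m hmj
  -- reachable by v₁ → reachable by v₂ (same witness)
  have h12 : ∀ j : List Bool, j.length ≤ k → ReachableNode S v₁ j → ReachableNode S v₂ j := by
    rintro j hj ⟨σ, h1, h2⟩
    refine ⟨σ, h1, fun i hi => ?_⟩
    have hreach : ReachableNode S v₁ (j.take i) := hpre v₁ j ⟨σ, h1, h2⟩ i hi.le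
    have hlen : (j.take i).length < k := by
      rw [List.length_take]; omega
    rw [h2 i hi]
    exact hagree _ hlen hreach _ (h1 i hi)
  -- reachable by v₂ → reachable by v₁ (induction on j from the right)
  have h21 : ∀ j : List Bool, j.length ≤ k → ReachableNode S v₂ j → ReachableNode S v₁ j := by
    intro j
    induction j using List.reverseRecOn with
    | nil =>
      intro _ _
      exact ⟨fun _ => (Classical.arbitrary F, 0), fun i hi => by simp at hi,
        fun i hi => by simp at hi⟩
    | append_singleton j' b ih =>
      rintro hj ⟨σ₂, h1, h2⟩
      have hlen : j'.length < k := by simp at hj; omega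
      have htake : ∀ i, i ≤ j'.length → (j' ++ [b]).take i = j'.take i :=
        fun i hi => List.take_append_of_le_length hi
      have hj'take : (j' ++ [b]).take j'.length = j' := by
        rw [htake _ le_rfl, List.take_length]
      have hlt : ∀ i, i < (j' ++ [b]).length ↔ i < j'.length + 1 := by simp
      -- j' is reachable by v₂
      have hreach2' : ReachableNode S v₂ j' := by
        have := hpre v₂ (j' ++ [b]) ⟨σ₂, h1, h2⟩ j'.length (by simp)
        rwa [hj'take] at this
      have hreach1' : ReachableNode S v₁ j' := ih hlen.le hreach2'
      obtain ⟨σ₁, g1, g2⟩ := hreach1'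
      -- the check at node j' itself
      have hmem : σ₂ j' ∈ S j' := by
        have := h1 j'.length (by simp)
        rwa [hj'take] at this
      have hbit2 : (b = false ↔ v₂ (σ₂ j').1 ≤ (σ₂ j').2) := by
        have := h2 j'.length (by simp)
        rwa [hj'take, show (j' ++ [b]).getD j'.length false = b by
          simp [List.getD_eq_getElem?_getD]] at this
      have hbit1 : (b = false ↔ v₁ (σ₂ j').1 ≤ (σ₂ j').2) := by
        rw [hbit2]
        exact (hagree j' hlen ⟨σ₁, g1, g2⟩ _ hmem).symm
      have hne : ∀ i, i < j'.length → ¬ (j'.take i = j') := by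
        intro i hi' h
        have := congrArg List.length h
        simp [List.length_take] at this
        omega
      refine ⟨fun x => if x = j' then σ₂ j' else σ₁ x, ?_, ?_⟩ <;> intro i hi <;>
        rw [List.length_append, List.length_singleton] at hi <;>
        rcases Nat.lt_succ_iff_lt_or_eq.mp hi with hi' | hi' <;> beta_reduce
      · rw [htake i hi'.le, if_neg (hne i hi')]
        exact g1 i hi'
      · subst hi'; rw [hj'take, if_pos rfl]; exact hmem
      · rw [htake i hi'.le, if_neg (hne i hi'),
          show (j' ++ [b]).getD i false = j'.getD i false by
            simp [List.getD_eq_getElem?_getD, List.getElem?_append, hi']]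
        exact g2 i hi'
      · subst hi'
        rw [hj'take, if_pos rfl, show (j' ++ [b]).getD j'.length false = b by
          simp [List.getD_eq_getElem?_getD]]
        exact hbit1
  refine ⟨fun j hj => ⟨h12 j hj.le, h21 j hj.le⟩, ?_⟩
  -- part (ii)
  intro σ hσ l hl
  have key : ∀ (va vb : F → ℝ),
      (∀ j : List Bool, j.length < k → ReachableNode S va j →
        ∀ a ∈ S j, (va a.1 ≤ a.2 ↔ vb a.1 ≤ a.2)) →
      ReachesLeaf k va σ l → ReachesLeaf k vb σ l := by
    rintro va vb hag ⟨_, hcond⟩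
    refine ⟨hl, fun i => ?_⟩
    have hreach : ReachableNode S va (l.take i.1) := by
      refine ⟨σ, fun m hm => ?_, fun m hm => ?_⟩ <;>
        rw [List.length_take] at hm <;>
        have hmi : m < i.1 := lt_of_lt_of_le hm (min_le_left _ _) <;>
        have hml : m < l.length := lt_of_lt_of_le hm (min_le_right _ _)
      · rw [List.take_take, min_eq_left hmi.le]
        exact hσ _ (by rw [List.length_take]; omega)
      · rw [List.take_take, min_eq_left hmi.le,
          show (l.take i.1).getD m false = l.getD m false by
            simp [List.getD_eq_getElem?_getD, List.getElem?_take, hmi]]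
        exact hcond ⟨m, by omega⟩
    have hlen : (l.take i.1).length < k := by
      rw [List.length_take]; have := i.2; omega
    rw [hcond i]
    exact hag _ hlen hreach _ (hσ _ hlen)
  constructor
  · exact key v₁ v₂ hagree
  · intro h2'
    -- strong induction on i: v₁'s condition holds at i
    have main : ∀ i : ℕ, i < k →
        (l.getD i false = false ↔ v₁ (σ (l.take i)).1 ≤ (σ (l.take i)).2) := by
      intro i
      induction i using Nat.strong_induction_on with
      | _ i ih =>
        intro hik
        have hreach : ReachableNode S v₁ (l.take i) := by
          refine ⟨σ, fun m hm => ?_, fun m hm => ?_⟩ <;>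
            rw [List.length_take] at hm <;>
            have hmi : m < i := lt_of_lt_of_le hm (min_le_left _ _) <;>
            have hml : m < l.length := lt_of_lt_of_le hm (min_le_right _ _)
          · rw [List.take_take, min_eq_left hmi.le]
            exact hσ _ (by rw [List.length_take]; omega)
          · rw [List.take_take, min_eq_left hmi.le,
              show (l.take i).getD m false = l.getD m false by
                simp [List.getD_eq_getElem?_getD, List.getElem?_take, hmi]]
            exact ih m hmi (by omega)
        have hlen : (l.take i).length < k := by rw [List.length_take]; omega
        rw [hagree _ hlen hreach _ (hσ _ hlen)]
        exact h2'.2 ⟨i, hik⟩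
    exact ⟨hl, fun i => main i.1 i.2⟩
end
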